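/- Let f, g, h be trajectories such that every pair among them overlaps and such that a_h ≤ a_g ≤ a_f and b_f ≤ b_g ≤ b_h. Then d_c(f,g) ≤ d_c(f,h) + d_c(h,g). -/
import Mathlib


open MeasureTheory Set

/-- The ℓ_p norm on ℝ^r. -/
noncomputable def lpNorm (r : ℕ) (p : ℝ) (x : Fin r → ℝ) : ℝ :=
  (∑ i, |x i| ^ p) ^ (1 / p)

/-- The ℓ_p distance between two trajectory segments aligned on [t₁, t₂]. -/
noncomputable def segDist (r : ℕ) (p : ℝ) (t₁ t₂ : ℝ) (f g : ℝ → Fin r → ℝ) : ℝ :=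
  ∫ t in t₁..t₂, lpNorm r p (fun i => f t i - g t i)

/-- A trajectory: a function ℝ → ℝ^r together with an interval [a, b] (a ≤ b)
on which it is continuous. -/
structure Traj (r : ℕ) where
  f : ℝ → Fin r → ℝ
  a : ℝ
  b : ℝ
  hab : a ≤ b
  cont : ContinuousOn f (Set.Icc a b)

/-- Two trajectories overlap if their time domains intersect. -/
def Overlap {r : ℕ} (F G : Traj r) : Prop := max F.a G.a ≤ min F.b G.b

/-- The pairwise spatio-temporal trajectory distance with segment cutoff
coefficient cS (equal FA and MD cutoffs). -/
noncomputable def dC (r : ℕ) (p cS : ℝ) (F G : Traj r) : ℝ :=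
  ((r : ℝ) * (cS * (|F.a - G.a| + |F.b - G.b|)) ^ p +
    min ((segDist r p (max F.a G.a) (min F.b G.b) F.f G.f) ^ p)
        ((r : ℝ) * (2 * cS * (min F.b G.b - max F.a G.a)) ^ p)) ^ (1 / p)

/- ----------------- auxiliary lemmas ----------------- -/

lemma lpNorm_nonneg' (r : ℕ) (p : ℝ) (x : Fin r → ℝ) : 0 ≤ lpNorm r p x :=
  Real.rpow_nonneg (Finset.sum_nonneg fun _ _ => Real.rpow_nonneg (abs_nonneg _) p) _

lemma lpNorm_tri' (r : ℕ) {p : ℝ} (hp : 1 ≤ p) (x y : Fin r → ℝ) :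
    lpNorm r p (fun i => x i + y i) ≤ lpNorm r p x + lpNorm r p y :=
  Real.Lp_add_le Finset.univ x y hp

lemma continuous_lpNorm' (r : ℕ) {p : ℝ} (hp : 1 ≤ p) : Continuous (lpNorm r p) := by
  have hp0 : (0:ℝ) ≤ p := le_trans zero_le_one hp
  have h1p : (0:ℝ) ≤ 1 / p := by positivity
  exact (Real.continuous_rpow_const h1p).comp <|
    continuous_finset_sum _ fun i _ =>
      (Real.continuous_rpow_const hp0).comp (continuous_apply i).abs

lemma segIntegrable (r : ℕ) {p : ℝ} (hp : 1 ≤ p) {a b : ℝ} (hab : a ≤ b)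
    {f g : ℝ → Fin r → ℝ} (hf : ContinuousOn f (Icc a b)) (hg : ContinuousOn g (Icc a b)) :
    IntervalIntegrable (fun t => lpNorm r p (fun i => f t i - g t i)) volume a b := by
  apply ContinuousOn.intervalIntegrable
  rw [uIcc_of_le hab]
  apply (continuous_lpNorm' r hp).comp_continuousOn
  apply continuousOn_pi.mpr
  intro i
  exact ((continuous_apply i).comp_continuousOn hf).sub
    ((continuous_apply i).comp_continuousOn hg)

lemma segDist_nonneg (r : ℕ) (p : ℝ) {a b : ℝ} (hab : a ≤ b) (f g : ℝ → Fin r → ℝ) :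
    0 ≤ segDist r p a b f g :=
  intervalIntegral.integral_nonneg hab fun _ _ => lpNorm_nonneg' r p _

lemma segDist_tri (r : ℕ) {p : ℝ} (hp : 1 ≤ p) {a1 b1 a2 b2 : ℝ}
    (h21 : a2 ≤ a1) (h11 : a1 ≤ b1) (h12 : b1 ≤ b2)
    {f g h : ℝ → Fin r → ℝ}
    (hf : ContinuousOn f (Icc a1 b1))
    (hg : ContinuousOn g (Icc a2 b2)) (hh : ContinuousOn h (Icc a2 b2)) :
    segDist r p a1 b1 f g ≤ segDist r p a1 b1 f h + segDist r p a2 b2 h g := by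
  have hsub : Icc a1 b1 ⊆ Icc a2 b2 := Icc_subset_Icc h21 h12
  have hg1 : ContinuousOn g (Icc a1 b1) := hg.mono hsub
  have hh1 : ContinuousOn h (Icc a1 b1) := hh.mono hsub
  have ifg := segIntegrable r hp h11 hf hg1
  have ifh := segIntegrable r hp h11 hf hh1
  have ihg1 := segIntegrable r hp h11 hh1 hg1
  have ihg2 := segIntegrable r hp (h21.trans (h11.trans h12)) hh hg
  have step1 : segDist r p a1 b1 f g ≤
      segDist r p a1 b1 f h + segDist r p a1 b1 h g := by
    rw [segDist, segDist, segDist, ← intervalIntegral.integral_add ifh ihg1]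
    apply intervalIntegral.integral_mono_on h11 ifg (ifh.add ihg1)
    intro t _
    have := lpNorm_tri' r hp (fun i => f t i - h t i) (fun i => h t i - g t i)
    simpa using this
  have step2 : segDist r p a1 b1 h g ≤ segDist r p a2 b2 h g := by
    apply intervalIntegral.integral_mono_interval h21 h11 h12 _ ihg2
    refine Filter.Eventually.of_forall fun t => ?_
    exact lpNorm_nonneg' r p _
  linarith

set_option maxHeartbeats 1000000 in
lemma lp2_tri {p : ℝ} (hp : 1 ≤ p) {x y x1 y1 x2 y2 : ℝ}
    (hx1 : 0 ≤ x1) (hy1 : 0 ≤ y1) (hx2 : 0 ≤ x2) (hy2 : 0 ≤ y2)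
    (hx0 : 0 ≤ x) (hy0 : 0 ≤ y) (hx : x ≤ x1 + x2) (hy : y ≤ y1 + y2) :
    (x ^ p + y ^ p) ^ (1/p) ≤ (x1 ^ p + y1 ^ p) ^ (1/p) + (x2 ^ p + y2 ^ p) ^ (1/p) := by
  have hp0 : 0 ≤ p := le_trans zero_le_one hp
  have h1 : (x ^ p + y ^ p) ^ (1/p) ≤ ((x1+x2) ^ p + (y1+y2) ^ p) ^ (1/p) := by
    apply Real.rpow_le_rpow (by positivity)
      (add_le_add (Real.rpow_le_rpow hx0 hx hp0) (Real.rpow_le_rpow hy0 hy hp0)) (by positivity)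
  refine h1.trans ?_
  have := Real.Lp_add_le (Finset.univ : Finset (Fin 2)) ![x1, y1] ![x2, y2] hp
  simpa [Fin.sum_univ_two, abs_of_nonneg, hx1, hy1, hx2, hy2,
    abs_of_nonneg (add_nonneg hx1 hx2), abs_of_nonneg (add_nonneg hy1 hy2)] using this

lemma min_rpow' {a b p : ℝ} (ha : 0 ≤ a) (hb : 0 ≤ b) (hp0 : 0 ≤ p) :
    min a b ^ p = min (a ^ p) (b ^ p) := by
  rcases le_total a b with h | h
  · rw [min_eq_left h, min_eq_left (Real.rpow_le_rpow ha h hp0)]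
  · rw [min_eq_right h, min_eq_right (Real.rpow_le_rpow hb h hp0)]

lemma rpow_root_mul {p : ℝ} (hp : 1 ≤ p) (c w : ℝ) (hc : 0 ≤ c) (hw : 0 ≤ w) :
    (c ^ (1/p) * w) ^ p = c * w ^ p := by
  have hpne : p ≠ 0 := by positivity
  rw [Real.mul_rpow (Real.rpow_nonneg hc _) hw, ← Real.rpow_mul hc,
    one_div, inv_mul_cancel₀ hpne, Real.rpow_one]

set_option maxHeartbeats 1000000 in
/-- Triangle-type inequality for the pairwise trajectory distance under the
endpoint ordering of this case. -/
theorem dC_tri_case6 (r : ℕ) (hr : 1 ≤ r) (p : ℝ) (hp : 1 ≤ p)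
    (cS : ℝ) (hcS : 0 < cS)
    (F G H : Traj r) (hFG : Overlap F G) (hFH : Overlap F H) (hHG : Overlap H G)
    (ha1 : H.a ≤ G.a) (ha2 : G.a ≤ F.a) (hb1 : F.b ≤ G.b) (hb2 : G.b ≤ H.b) :
    dC r p cS F G ≤ dC r p cS F H + dC r p cS H G := by
  have hF := F.hab
  have hG := G.hab
  have hH := H.hab
  -- resolve maxima and minima
  have eFGa : max F.a G.a = F.a := max_eq_left ha2
  have eFGb : min F.b G.b = F.b := min_eq_left hb1
  have eFHa : max F.a H.a = F.a := max_eq_left (ha1.trans ha2)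
  have eFHb : min F.b H.b = F.b := min_eq_left (hb1.trans hb2)
  have eHGa : max H.a G.a = G.a := max_eq_right ha1
  have eHGb : min H.b G.b = G.b := min_eq_right hb2
  -- abbreviations
  set R : ℝ := (r : ℝ) ^ (1/p) with hR
  have hr0 : (0:ℝ) ≤ r := Nat.cast_nonneg r
  have hR0 : 0 ≤ R := Real.rpow_nonneg hr0 _
  have hp0 : 0 ≤ p := le_trans zero_le_one hp
  -- segment distances
  set SFG := segDist r p F.a F.b F.f G.f with hSFG
  set SFH := segDist r p F.a F.b F.f H.f with hSFH
  set SHG := segDist r p G.a G.b H.f G.f with hSHG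
  have hSFG0 : 0 ≤ SFG := segDist_nonneg r p hF _ _
  have hSFH0 : 0 ≤ SFH := segDist_nonneg r p hF _ _
  have hSHG0 : 0 ≤ SHG := segDist_nonneg r p hG _ _
  -- cutoffs
  set MF : ℝ := R * (2 * cS * (F.b - F.a)) with hMF
  set MG : ℝ := R * (2 * cS * (G.b - G.a)) with hMG
  have hMF0 : 0 ≤ MF := by
    apply mul_nonneg hR0
    have : (0:ℝ) ≤ F.b - F.a := by linarith
    positivity
  have hMG0 : 0 ≤ MG := by
    apply mul_nonneg hR0
    have : (0:ℝ) ≤ G.b - G.a := by linarith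
    positivity
  have hMFMG : MF ≤ MG := by
    apply mul_le_mul_of_nonneg_left _ hR0
    have : F.b - F.a ≤ G.b - G.a := by linarith
    nlinarith
  -- temporal terms
  have h2F : (0:ℝ) ≤ 2 * cS * (F.b - F.a) := by nlinarith
  have h2G : (0:ℝ) ≤ 2 * cS * (G.b - G.a) := by nlinarith
  have habsFG : |F.a - G.a| + |F.b - G.b| = (F.a - G.a) + (G.b - F.b) := by
    rw [abs_of_nonneg (by linarith), abs_of_nonpos (by linarith)]; ring
  have habsFH : |F.a - H.a| + |F.b - H.b| = (F.a - H.a) + (H.b - F.b) := by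
    rw [abs_of_nonneg (by linarith), abs_of_nonpos (by linarith)]; ring
  have habsHG : |H.a - G.a| + |H.b - G.b| = (G.a - H.a) + (H.b - G.b) := by
    rw [abs_of_nonpos (by linarith), abs_of_nonneg (by linarith)]; ring
  set TFG : ℝ := cS * ((F.a - G.a) + (G.b - F.b)) with hTFG
  set TFH : ℝ := cS * ((F.a - H.a) + (H.b - F.b)) with hTFH
  set THG : ℝ := cS * ((G.a - H.a) + (H.b - G.b)) with hTHG
  have hTFG0 : 0 ≤ TFG := by apply mul_nonneg hcS.le; linarith
  have hTFH0 : 0 ≤ TFH := by apply mul_nonneg hcS.le; linarith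
  have hTHG0 : 0 ≤ THG := by apply mul_nonneg hcS.le; linarith
  -- rewrite dC values
  have edFG : dC r p cS F G = ((R * TFG) ^ p + (min SFG MF) ^ p) ^ (1/p) := by
    rw [dC, eFGa, eFGb, habsFG, rpow_root_mul hp _ _ hr0 hTFG0,
      min_rpow' hSFG0 hMF0 hp0, rpow_root_mul hp _ _ hr0 h2F]
  have edFH : dC r p cS F H = ((R * TFH) ^ p + (min SFH MF) ^ p) ^ (1/p) := by
    rw [dC, eFHa, eFHb, habsFH, rpow_root_mul hp _ _ hr0 hTFH0,
      min_rpow' hSFH0 hMF0 hp0, rpow_root_mul hp _ _ hr0 h2F]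
  have edHG : dC r p cS H G = ((R * THG) ^ p + (min SHG MG) ^ p) ^ (1/p) := by
    rw [dC, eHGa, eHGb, habsHG, rpow_root_mul hp _ _ hr0 hTHG0,
      min_rpow' hSHG0 hMG0 hp0, rpow_root_mul hp _ _ hr0 h2G]
  rw [edFG, edFH, edHG]
  -- spatial triangle inequality
  have htri : SFG ≤ SFH + SHG := by
    rw [hSFG, hSFH, hSHG]
    exact segDist_tri r hp ha2 hF hb1
      F.cont G.cont (H.cont.mono (Icc_subset_Icc ha1 hb2))
  -- min inequality
  have hy : min SFG MF ≤ min SFH MF + min SHG MG := by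
    rcases le_total SFH MF with h1 | h1
    · rcases le_total SHG MG with h2 | h2
      · rw [min_eq_left h1, min_eq_left h2]
        exact (min_le_left _ _).trans htri
      · rw [min_eq_right h2]
        calc min SFG MF ≤ MF := min_le_right _ _
          _ ≤ MG := hMFMG
          _ ≤ min SFH MF + MG := le_add_of_nonneg_left (le_min hSFH0 hMF0)
    · rw [min_eq_right h1]
      calc min SFG MF ≤ MF := min_le_right _ _
        _ ≤ MF + min SHG MG := le_add_of_nonneg_right (le_min hSHG0 hMG0)
  -- temporal inequality
  have hx : R * TFG ≤ R * TFH + R * THG := by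
    have hT : TFG ≤ TFH + THG := by
      rw [hTFG, hTFH, hTHG]; nlinarith [hcS.le]
    calc R * TFG ≤ R * (TFH + THG) := mul_le_mul_of_nonneg_left hT hR0
      _ = R * TFH + R * THG := by ring
  exact lp2_tri hp (mul_nonneg hR0 hTFH0) (le_min hSFH0 hMF0)
    (mul_nonneg hR0 hTHG0) (le_min hSHG0 hMG0)
    (mul_nonneg hR0 hTFG0) (le_min hSFG0 hMF0) hx hy
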